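/- Let A be an m × n real matrix, b ∈ ℝ^m, x_* a solution of Ax = b, and x_k ∈ ℝ^n. Let S be any m × s matrix, and suppose the i-th row of S^T A is nonzero, where i is an index maximizing ((S^T b)_j − (S^T A x_k)_j)². Define x_{k+1} = x_k + ((S^T b)_i − ⟨(S^T A)_i, x_k⟩)/‖(S^T A)_i‖₂² · (S^T A)_i. Then ‖x_{k+1} − x_*‖₂² = ‖x_k − x_*‖₂² − ‖S^T b − S^T A x_k‖_∞² / ‖(S^T A)_i‖₂². -/

import Mathlib

open MeasureTheory ProbabilityTheory Real

/-- Squared Euclidean norm of a vector. -/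
noncomputable def norm2sq {n : ℕ} (u : Fin n → ℝ) : ℝ := ∑ i, u i ^ 2

/-- Squared Frobenius norm of a matrix. -/
noncomputable def frobSq {m n : ℕ} (A : Matrix (Fin m) (Fin n) ℝ) : ℝ := ∑ i, ∑ j, A i j ^ 2

/-- Squared smallest singular value: infimum of `‖A u‖₂²` over unit vectors `u`. -/
noncomputable def sminSq {m n : ℕ} (A : Matrix (Fin m) (Fin n) ℝ) : ℝ :=
  sInf {r | ∃ u : Fin n → ℝ, norm2sq u = 1 ∧ r = norm2sq (A.mulVec u)}

/-- Sup (infinity) norm of a vector. -/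
noncomputable def supNorm {s : ℕ} (u : Fin s → ℝ) : ℝ := ⨆ j, |u j|

/-! `x_{k+1}` is the orthogonal projection of `x_k` onto the hyperplane of the `i`-th sketched
equation, which contains `x_*` because `Sᵀ A x_* = Sᵀ b`; Pythagoras gives the decrease
`(residual)² / ‖(Sᵀ A)_i‖²`, and the greedy choice of `i` makes that residual the sup norm. -/

open Matrix

-- Projection onto `{z | a ⬝ᵥ z = β}`; since `_ / 0 = 0` it is the identity when `a = 0`.
noncomputable def hyperplaneProj {n : ℕ} (a : Fin n → ℝ) (β : ℝ) (x : Fin n → ℝ) : Fin n → ℝ :=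
  x + ((β - a ⬝ᵥ x) / norm2sq a) • a

theorem norm2sq_eq_dotProduct {n : ℕ} (u : Fin n → ℝ) : norm2sq u = u ⬝ᵥ u := by
  simp only [norm2sq, dotProduct, sq]

theorem norm2sq_add_smul {n : ℕ} (u a : Fin n → ℝ) (c : ℝ) :
    norm2sq (u + c • a) = norm2sq u + 2 * c * (a ⬝ᵥ u) + c ^ 2 * norm2sq a := by
  simp only [norm2sq_eq_dotProduct, add_dotProduct, dotProduct_add, smul_dotProduct,
    dotProduct_smul, smul_eq_mul, dotProduct_comm u a]
  ring

theorem norm2sq_hyperplaneProj_sub {n : ℕ} {a y : Fin n → ℝ} {β : ℝ} (hy : a ⬝ᵥ y = β)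
    (x : Fin n → ℝ) :
    norm2sq (hyperplaneProj a β x - y) = norm2sq (x - y) - (β - a ⬝ᵥ x) ^ 2 / norm2sq a := by
  have hsplit : hyperplaneProj a β x - y = (x - y) + ((β - a ⬝ᵥ x) / norm2sq a) • a := by
    rw [hyperplaneProj]; abel
  have hres : a ⬝ᵥ (x - y) = -(β - a ⬝ᵥ x) := by rw [dotProduct_sub, hy]; ring
  rw [hsplit, norm2sq_add_smul, hres]
  rcases eq_or_ne (norm2sq a) 0 with h0 | h0
  · simp [h0]
  · field_simp
    ring

theorem supNorm_eq_abs_of_forall_sq_le {s : ℕ} {u : Fin s → ℝ} {i : Fin s}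
    (h : ∀ j, u j ^ 2 ≤ u i ^ 2) : supNorm u = |u i| :=
  have : Nonempty (Fin s) := ⟨i⟩
  le_antisymm (ciSup_le fun j => sq_le_sq.mp (h j))
    (le_ciSup (f := fun j => |u j|) (Set.finite_range _).bddAbove i)

theorem sketched_motzkin_step_pythagorean_general
    {m n s : ℕ} (A : Matrix (Fin m) (Fin n) ℝ) (b : Fin m → ℝ)
    (xstar xk : Fin n → ℝ) (hsol : A.mulVec xstar = b)
    (S : Matrix (Fin m) (Fin s) ℝ) (i : Fin s)
    (hargmax : ∀ j : Fin s,
      ((S.transpose.mulVec b) j - ((S.transpose * A).mulVec xk) j) ^ 2 ≤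
      ((S.transpose.mulVec b) i - ((S.transpose * A).mulVec xk) i) ^ 2)
    (xk1 : Fin n → ℝ)
    (hupdate : xk1 = fun t => xk t +
      ((S.transpose.mulVec b) i - ∑ l, (S.transpose * A) i l * xk l) /
        norm2sq (fun l => (S.transpose * A) i l) * (S.transpose * A) i t) :
    norm2sq (fun t => xk1 t - xstar t) =
      norm2sq (fun t => xk t - xstar t) -
        (supNorm (fun j => (S.transpose.mulVec b) j - ((S.transpose * A).mulVec xk) j)) ^ 2 /
          norm2sq (fun l => (S.transpose * A) i l) := by
  have hsketch : (Sᵀ * A) i ⬝ᵥ xstar = (Sᵀ *ᵥ b) i := by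
    rw [← hsol, mulVec_mulVec]
    rfl
  have hstep : xk1 = hyperplaneProj ((Sᵀ * A) i) ((Sᵀ *ᵥ b) i) xk := hupdate
  rw [hstep, supNorm_eq_abs_of_forall_sq_le hargmax, sq_abs]
  exact norm2sq_hyperplaneProj_sub hsketch xk

/-- Pythagorean identity for one step of the sketched Motzkin method: projecting onto the
row of `Sᵀ A` with maximal residual gives
`‖x_{k+1} − x_*‖₂² = ‖x_k − x_*‖₂² − ‖Sᵀb − SᵀA x_k‖_∞² / ‖(SᵀA)_i‖₂²`. -/
theorem sketched_motzkin_step_pythagorean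
    {m n s : ℕ} (A : Matrix (Fin m) (Fin n) ℝ) (b : Fin m → ℝ)
    (xstar xk : Fin n → ℝ) (hsol : A.mulVec xstar = b)
    (S : Matrix (Fin m) (Fin s) ℝ) (i : Fin s)
    (hrow : norm2sq (fun l => (S.transpose * A) i l) ≠ 0)
    (hargmax : ∀ j : Fin s,
      ((S.transpose.mulVec b) j - ((S.transpose * A).mulVec xk) j) ^ 2 ≤
      ((S.transpose.mulVec b) i - ((S.transpose * A).mulVec xk) i) ^ 2)
    (xk1 : Fin n → ℝ)
    (hupdate : xk1 = fun t => xk t +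
      ((S.transpose.mulVec b) i - ∑ l, (S.transpose * A) i l * xk l) /
        norm2sq (fun l => (S.transpose * A) i l) * (S.transpose * A) i t) :
    norm2sq (fun t => xk1 t - xstar t) =
      norm2sq (fun t => xk t - xstar t) -
        (supNorm (fun j => (S.transpose.mulVec b) j - ((S.transpose * A).mulVec xk) j)) ^ 2 /
          norm2sq (fun l => (S.transpose * A) i l) :=
  sketched_motzkin_step_pythagorean_general A b xstar xk hsol S i hargmax xk1 hupdate
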